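/- arXiv:0905.1834 — 3 statements merged into one kernel-verified Lean document; each statement's English description precedes it below -/
import Mathlib

section
/- Let A be an n×n complex matrix and U a Hermitian matrix satisfying Lyapunov's equation A*U + UA = V with V positive definite. Then every eigenvalue of A has nonzero real part (A has no purely imaginary eigenvalues). -/
open scoped Matrix ComplexOrder

/-!
If `A x = μ x` with `x ≠ 0`, then `x* V x = x* (A* U + U A) x = (μ̄ + μ) x* U x = 2 Re μ · x* U x`,
and the left side is positive, so `Re μ ≠ 0`.
-/

namespace Matrix

variable {ι : Type*} [Fintype ι] [DecidableEq ι]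

theorem exists_mulVec_eq_smul_of_mem_spectrum {K : Type*} [Field K] {A : Matrix ι ι K} {μ : K}
    (hμ : μ ∈ spectrum K A) : ∃ x ≠ 0, A *ᵥ x = μ • x := by
  rw [← spectrum_toLin', ← Module.End.hasEigenvalue_iff_mem_spectrum] at hμ
  obtain ⟨x, hx⟩ := hμ.exists_hasEigenvector
  exact ⟨x, hx.2, by simpa using hx.apply_eq_smul⟩

omit [DecidableEq ι] in
theorem star_dotProduct_lyapunov_mulVec_of_mulVec_eq_smul {R : Type*} [CommRing R] [StarRing R]
    {A : Matrix ι ι R} (U : Matrix ι ι R) {x : ι → R} {μ : R} (hx : A *ᵥ x = μ • x) :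
    star x ⬝ᵥ (Aᴴ * U + U * A) *ᵥ x = (star μ + μ) * (star x ⬝ᵥ U *ᵥ x) := by
  rw [add_mulVec, dotProduct_add, ← mulVec_mulVec, ← mulVec_mulVec, dotProduct_mulVec _ Aᴴ,
    ← star_mulVec, hx]
  simp only [mulVec_smul, dotProduct_smul, star_smul, smul_dotProduct, smul_eq_mul, add_mul]

end Matrix

theorem no_purely_imaginary_eigenvalue_general {n : ℕ} (A U V : Matrix (Fin n) (Fin n) ℂ)
    (hLyap : Aᴴ * U + U * A = V) (hV : V.PosDef) :
    ∀ μ ∈ spectrum ℂ A, μ.re ≠ 0 := by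
  intro μ hμ hre
  obtain ⟨x, hx0, hAx⟩ := Matrix.exists_mulVec_eq_smul_of_mem_spectrum hμ
  have hpos := hV.dotProduct_mulVec_pos hx0
  have hconj : star μ + μ = 0 := by
    rw [add_comm, Complex.star_def, Complex.add_conj, hre]
    simp
  rw [← hLyap, Matrix.star_dotProduct_lyapunov_mulVec_of_mulVec_eq_smul U hAx, hconj,
    zero_mul] at hpos
  exact hpos.false

theorem no_purely_imaginary_eigenvalue {n : ℕ} (A U V : Matrix (Fin n) (Fin n) ℂ)
    (hU : U.IsHermitian) (hLyap : Aᴴ * U + U * A = V) (hV : V.PosDef) :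
    ∀ μ ∈ spectrum ℂ A, μ.re ≠ 0 :=
  no_purely_imaginary_eigenvalue_general A U V hLyap hV
end

section
/- Let A be an n×n complex matrix and U a Hermitian matrix with A*U + UA = V positive definite. If φ is an eigenvector of A with eigenvalue λ satisfying Re λ > 0, then ⟨Uφ,φ⟩ > 0. Dually, if Re λ < 0 then ⟨Uφ,φ⟩ < 0. -/
/-!
Evaluated on an eigenvector `φ` with eigenvalue `μ`, the Lyapunov identity gives
`⟨Vφ, φ⟩ = (conj μ + μ) ⟨Uφ, φ⟩ = 2 Re μ ⟨Uφ, φ⟩`; the left side has positive real part,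
so `Re ⟨Uφ, φ⟩` has the sign of `Re μ`.
-/

open scoped Matrix ComplexOrder

namespace Matrix

variable {𝕜 ι : Type*} [RCLike 𝕜] [Fintype ι]

theorem star_dotProduct_conjTranspose_mul_mulVec_of_mulVec_eq_smul {A U : Matrix ι ι 𝕜}
    {φ : ι → 𝕜} {μ : 𝕜} (h : A *ᵥ φ = μ • φ) :
    star φ ⬝ᵥ ((Aᴴ * U) *ᵥ φ) = star μ * (star φ ⬝ᵥ (U *ᵥ φ)) := by
  rw [← mulVec_mulVec, dotProduct_mulVec, ← star_mulVec, h, star_smul, smul_dotProduct,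
    smul_eq_mul]

theorem star_dotProduct_mul_mulVec_of_mulVec_eq_smul {A U : Matrix ι ι 𝕜}
    {φ : ι → 𝕜} {μ : 𝕜} (h : A *ᵥ φ = μ • φ) :
    star φ ⬝ᵥ ((U * A) *ᵥ φ) = μ * (star φ ⬝ᵥ (U *ᵥ φ)) := by
  rw [← mulVec_mulVec, h, mulVec_smul, dotProduct_smul, smul_eq_mul]

theorem re_star_dotProduct_lyapunov_mulVec_of_mulVec_eq_smul {A U : Matrix ι ι 𝕜}
    {φ : ι → 𝕜} {μ : 𝕜} (h : A *ᵥ φ = μ • φ) :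
    RCLike.re (star φ ⬝ᵥ ((Aᴴ * U + U * A) *ᵥ φ)) =
      2 * RCLike.re μ * RCLike.re (star φ ⬝ᵥ (U *ᵥ φ)) := by
  rw [add_mulVec, dotProduct_add, star_dotProduct_conjTranspose_mul_mulVec_of_mulVec_eq_smul h,
    star_dotProduct_mul_mulVec_of_mulVec_eq_smul h, ← add_mul, RCLike.star_def, add_comm,
    RCLike.add_conj, ← RCLike.ofReal_ofNat, ← RCLike.ofReal_mul, RCLike.re_ofReal_mul]

end Matrix

theorem sign_of_form_on_eigenvector_general {n : ℕ} (A U V : Matrix (Fin n) (Fin n) ℂ)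
    (hLyap : Aᴴ * U + U * A = V) (hV : V.PosDef)
    (φ : Fin n → ℂ) (hφ : φ ≠ 0) (μ : ℂ) (heig : A.mulVec φ = μ • φ) :
    (0 < μ.re → 0 < (dotProduct (star φ) (U.mulVec φ)).re) ∧
    (μ.re < 0 → (dotProduct (star φ) (U.mulVec φ)).re < 0) := by
  have hform : 0 < 2 * μ.re * (star φ ⬝ᵥ (U *ᵥ φ)).re :=
    calc 0 < (star φ ⬝ᵥ (V *ᵥ φ)).re := (Complex.pos_iff.mp (hV.dotProduct_mulVec_pos hφ)).1
      _ = 2 * μ.re * (star φ ⬝ᵥ (U *ᵥ φ)).re := by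
        rw [← hLyap]
        exact Matrix.re_star_dotProduct_lyapunov_mulVec_of_mulVec_eq_smul heig
  exact ⟨fun hμ => pos_of_mul_pos_right hform (by linarith),
    fun hμ => neg_of_mul_pos_right hform (by linarith)⟩

theorem sign_of_form_on_eigenvector {n : ℕ} (A U V : Matrix (Fin n) (Fin n) ℂ)
    (hU : U.IsHermitian) (hLyap : Aᴴ * U + U * A = V) (hV : V.PosDef)
    (φ : Fin n → ℂ) (hφ : φ ≠ 0) (μ : ℂ) (heig : A.mulVec φ = μ • φ) :
    (0 < μ.re → 0 < (dotProduct (star φ) (U.mulVec φ)).re) ∧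
    (μ.re < 0 → (dotProduct (star φ) (U.mulVec φ)).re < 0) :=
  sign_of_form_on_eigenvector_general A U V hLyap hV φ hφ μ heig
end

section
/- Let X and Y be finite-dimensional neutral subspaces of an indefinite inner product space that are skewly linked. Then for every basis φ₁,…,φ_m of X there exists a basis ψ₁,…,ψ_m of Y such that [φᵢ,ψⱼ] = δᵢⱼ for all i,j. -/
/-!
Polarization makes the neutral subspace `Y` totally isotropic, so a vector of `Y` orthogonal
to `X` is orthogonal to all of `X + Y` and vanishes by nondegeneracy. Hence `ψ ↦ ([ψ, φᵢ])ᵢ`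
embeds `Y` into `ℂᵐ`, and since `dim Y = m` it is an isomorphism; `ψⱼ` is the preimage of the
`j`-th unit vector.
-/

open Module

theorem Module.Basis.exists_apply_eq_single_of_injective {K M ι : Type*} [Field K]
    [AddCommGroup M] [Module K M] [FiniteDimensional K M] [Fintype ι] [DecidableEq ι]
    (S : M →ₗ[K] ι → K) (hS : Function.Injective S) (hdim : finrank K M = Fintype.card ι) :
    ∃ b : Basis ι K M, ∀ j, S (b j) = Pi.single j 1 := by
  let e := LinearMap.linearEquivOfInjective S hS (by simp [hdim])
  refine ⟨(Pi.basisFun K ι).map e.symm, fun j => ?_⟩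
  rw [Basis.map_apply, Pi.basisFun_apply]
  exact e.apply_symm_apply _

section SkewlyLinked

variable {V : Type*} [AddCommGroup V] [Module ℂ V] (B : V →ₗ[ℂ] V →ₗ⋆[ℂ] ℂ)

theorem apply_eq_zero_of_forall_self_eq_zero {W : Submodule ℂ V} (hW : ∀ w ∈ W, B w w = 0)
    {x y : V} (hx : x ∈ W) (hy : y ∈ W) : B x y = 0 := by
  have h1 := hW (x + y) (W.add_mem hx hy)
  have h2 := hW (x + Complex.I • y) (W.add_mem hx (W.smul_mem _ hy))
  simp only [map_add, LinearMap.add_apply, map_smulₛₗ, LinearMap.smul_apply,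
    Complex.conj_I, smul_eq_mul, hW x hx, hW y hy, RingHom.id_apply] at h1 h2
  have h3 : (-2 * Complex.I) * B x y = 0 := by linear_combination h2 - Complex.I * h1
  simpa [Complex.I_ne_zero] using h3

theorem eq_zero_of_forall_apply_eq_zero_of_isotropic {X Y : Submodule ℂ V}
    (hY : ∀ y ∈ Y, B y y = 0)
    (hnondeg : ∀ φ ∈ X ⊔ Y, (∀ ψ ∈ X ⊔ Y, B φ ψ = 0) → φ = 0)
    {ψ : V} (hψ : ψ ∈ Y) (hψX : ∀ x ∈ X, B ψ x = 0) : ψ = 0 := by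
  have hker : X ⊔ Y ≤ LinearMap.ker (B ψ) :=
    sup_le (fun x hx => hψX x hx) (fun y hy => apply_eq_zero_of_forall_self_eq_zero B hY hψ hy)
  exact hnondeg ψ (Submodule.mem_sup_right hψ) fun z hz => hker hz

end SkewlyLinked

theorem skewly_linked_dual_basis_general {V : Type*} [AddCommGroup V] [Module ℂ V]
    (B : V →ₗ[ℂ] V →ₗ⋆[ℂ] ℂ)
    (hHerm : ∀ x y : V, B x y = (starRingEnd ℂ) (B y x))
    (m : ℕ) (X Y : Submodule ℂ V) [FiniteDimensional ℂ Y]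
    (hYneutral : ∀ φ ∈ Y, B φ φ = 0)
    (hYdim : Module.finrank ℂ Y = m)
    (hnondeg : ∀ φ ∈ X ⊔ Y, (∀ ψ ∈ X ⊔ Y, B φ ψ = 0) → φ = 0)
    (φb : Module.Basis (Fin m) ℂ X) :
    ∃ ψb : Module.Basis (Fin m) ℂ Y,
      ∀ i j : Fin m, B (φb i : V) (ψb j : V) = if i = j then 1 else 0 := by
  let S : Y →ₗ[ℂ] Fin m → ℂ := LinearMap.pi fun i => (B.flip (φb i)).domRestrict Y
  have hS : Function.Injective S := by
    rw [← LinearMap.ker_eq_bot, eq_bot_iff]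
    intro ψ hψ
    have hψX : B ψ ∘ₛₗ X.subtype = 0 := φb.ext fun i => congrFun hψ i
    exact Subtype.ext <| eq_zero_of_forall_apply_eq_zero_of_isotropic B hYneutral hnondeg ψ.2
      fun x hx => LinearMap.congr_fun hψX ⟨x, hx⟩
  obtain ⟨ψb, hψb⟩ := Basis.exists_apply_eq_single_of_injective S hS (by simp [hYdim])
  refine ⟨ψb, fun i j => ?_⟩
  have hij : B (ψb j) (φb i) = (Pi.single j 1 : Fin m → ℂ) i := congrFun (hψb j) i
  rw [hHerm, hij, Pi.single_apply]
  simp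

theorem skewly_linked_dual_basis {V : Type*} [AddCommGroup V] [Module ℂ V]
    (B : V →ₗ[ℂ] V →ₗ⋆[ℂ] ℂ)
    (hHerm : ∀ x y : V, B x y = (starRingEnd ℂ) (B y x))
    (m : ℕ) (X Y : Submodule ℂ V) [FiniteDimensional ℂ Y]
    (hXneutral : ∀ φ ∈ X, B φ φ = 0)
    (hYneutral : ∀ φ ∈ Y, B φ φ = 0)
    (hXY : X ⊓ Y = ⊥)
    (hYdim : Module.finrank ℂ Y = m)
    (hnondeg : ∀ φ ∈ X ⊔ Y, (∀ ψ ∈ X ⊔ Y, B φ ψ = 0) → φ = 0)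
    (φb : Module.Basis (Fin m) ℂ X) :
    ∃ ψb : Module.Basis (Fin m) ℂ Y,
      ∀ i j : Fin m, B (φb i : V) (ψb j : V) = if i = j then 1 else 0 :=
  skewly_linked_dual_basis_general B hHerm m X Y hYneutral hYdim hnondeg φb
end
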